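/- arXiv:2509.12637 — 2 statements merged into one kernel-verified Lean document; each statement's English description precedes it below -/
import Mathlib

section
/- Let n be a positive natural number and let (E_α)_{α ∈ A} be a finite family of n×n positive semidefinite complex matrices with Σ_α E_α = I, and define the bare measurement channel Φ(ρ) = Σ_α √E_α ρ √E_α. If an n×n complex matrix ρ satisfies ‖Φ(ρ)‖_F = ‖ρ‖_F, then ρ commutes with E_α for every α ∈ A. -/
open Matrix
open scoped ComplexOrder

/-- The Frobenius (Hilbert–Schmidt) norm `‖A‖_F = √(Tr(A†A))`. -/
noncomputable def frobNorm {n : ℕ} (A : Matrix (Fin n) (Fin n) ℂ) : ℝ :=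
  Real.sqrt ((Aᴴ * A).trace).re

/-- The positive semidefinite square root of a positive semidefinite matrix, with the
definition `Matrix.PosSemidef.sqrt` had in Mathlib of December 2024 (since removed). -/
noncomputable def Matrix.PosSemidef.sqrt {m : Type*} [Fintype m] [DecidableEq m]
    {A : Matrix m m ℂ} (hA : A.PosSemidef) : Matrix m m ℂ :=
  hA.1.eigenvectorUnitary.1 * diagonal ((↑) ∘ (√·) ∘ hA.1.eigenvalues) *
    (star hA.1.eigenvectorUnitary : Matrix m m ℂ)

/-!
Write `S α = √E α`, so `Φ X = ∑ S α X S α` with `∑ S α ^ 2 = 1`. The operators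
`K = S β S α` are Kraus operators of `Φ ∘ Φ` satisfying both `∑ Kᴴ K = 1` and
`∑ K Kᴴ = 1`, and for such a family expanding the squares gives
`∑ ‖K ρ - ρ K‖² = 2 ‖ρ‖² - 2 Re ⟪ρ, Φ (Φ ρ)⟫ = 2 (‖ρ‖² - ‖Φ ρ‖²)`,
the last step because `Φ` is self-adjoint for the Hilbert–Schmidt inner product.
Equality of norms therefore forces every `K` to commute with `ρ`, in particular
`K = S α S α = E α`.
-/

namespace Matrix

section Sqrt

variable {m : Type*} [Fintype m] [DecidableEq m] {A : Matrix m m ℂ}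

lemma PosSemidef.conjTranspose_sqrt (hA : A.PosSemidef) : hA.sqrtᴴ = hA.sqrt := by
  simp [PosSemidef.sqrt, conjTranspose_mul, diagonal_conjTranspose, star_eq_conjTranspose,
    mul_assoc, Function.comp_def, Pi.star_def]

lemma PosSemidef.sqrt_mul_self (hA : A.PosSemidef) : hA.sqrt * hA.sqrt = A := by
  set U := hA.1.eigenvectorUnitary
  set D : Matrix m m ℂ := diagonal ((↑) ∘ (√·) ∘ hA.1.eigenvalues)
  have hU : (star U : Matrix m m ℂ) * U = 1 := Unitary.coe_star_mul_self U
  have hD : D * D = diagonal ((↑) ∘ hA.1.eigenvalues) := by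
    simp only [D, diagonal_mul_diagonal, Function.comp_apply, ← Complex.ofReal_mul,
      Real.mul_self_sqrt (hA.eigenvalues_nonneg _)]
    rfl
  calc hA.sqrt * hA.sqrt = U * (D * D) * (star U : Matrix m m ℂ) := by
        simp only [PosSemidef.sqrt, U, D, mul_assoc, ← mul_assoc (star U : Matrix m m ℂ), hU,
          one_mul]
    _ = A := by rw [hD]; exact hA.1.spectral_theorem.symm

end Sqrt

section Commutator

variable {R ι m : Type*} [CommRing R] [Fintype ι] [Fintype m]

lemma sum_mul_sum_mul_mul (A B C D : ι → Matrix m m R) (X : Matrix m m R) :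
    ∑ i, A i * (∑ j, B j * X * C j) * D i =
      ∑ p : ι × ι, A p.1 * B p.2 * X * (C p.2 * D p.1) := by
  simp only [Fintype.sum_prod_type, Finset.mul_sum, Finset.sum_mul, mul_assoc]

variable [StarRing R]

lemma trace_conjTranspose_sum_mul_mul (S : ι → Matrix m m R) (hS : ∀ i, (S i)ᴴ = S i)
    (X Y : Matrix m m R) :
    ((∑ i, S i * X * S i)ᴴ * Y).trace = (Xᴴ * ∑ i, S i * Y * S i).trace := by
  simp only [conjTranspose_sum, conjTranspose_mul, hS, Finset.sum_mul, Finset.mul_sum, trace_sum]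
  refine Finset.sum_congr rfl fun i _ => ?_
  rw [← trace_mul_cycle]
  simp only [mul_assoc]

variable [DecidableEq m]

lemma sum_trace_commutator_conjTranspose_mul_self (K : ι → Matrix m m R)
    (hK : ∑ i, (K i)ᴴ * K i = 1) (hK' : ∑ i, K i * (K i)ᴴ = 1) (X : Matrix m m R) :
    ∑ i, ((K i * X - X * K i)ᴴ * (K i * X - X * K i)).trace =
      2 * (Xᴴ * X).trace - (Xᴴ * ∑ i, (K i)ᴴ * X * K i).trace
        - ((∑ i, (K i)ᴴ * X * K i)ᴴ * X).trace := by
  have h : ∀ i, ((K i * X - X * K i)ᴴ * (K i * X - X * K i)).trace =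
      (Xᴴ * ((K i)ᴴ * K i) * X).trace + (Xᴴ * X * (K i * (K i)ᴴ)).trace
        - (Xᴴ * ((K i)ᴴ * X * K i)).trace - (((K i)ᴴ * X * K i)ᴴ * X).trace := by
    intro i
    have : ((K i)ᴴ * (Xᴴ * (X * K i))).trace = (Xᴴ * (X * (K i * (K i)ᴴ))).trace := by
      rw [trace_mul_comm]; simp only [mul_assoc]
    simp only [conjTranspose_sub, conjTranspose_mul, conjTranspose_conjTranspose, sub_mul,
      mul_sub, trace_sub, mul_assoc, this]
    ring
  simp only [h, Finset.sum_sub_distrib, Finset.sum_add_distrib, ← trace_sum, ← Finset.mul_sum,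
    ← Finset.sum_mul, ← conjTranspose_sum, hK, hK']
  simp only [mul_one]; ring

end Commutator

lemma eq_zero_of_sum_trace_conjTranspose_mul_self_eq_zero {ι m : Type*} [Fintype ι] [Fintype m]
    {A : ι → Matrix m m ℂ} (h : ∑ i, ((A i)ᴴ * A i).trace = 0) (i : ι) : A i = 0 := by
  rw [Finset.sum_eq_zero_iff_of_nonneg fun j _ =>
    (posSemidef_conjTranspose_mul_self _).trace_nonneg] at h
  exact trace_conjTranspose_mul_self_eq_zero_iff.1 (h i (Finset.mem_univ i))

end Matrix

lemma ofReal_frobNorm_sq {n : ℕ} (A : Matrix (Fin n) (Fin n) ℂ) :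
    ((frobNorm A ^ 2 : ℝ) : ℂ) = (Aᴴ * A).trace := by
  have h := (posSemidef_conjTranspose_mul_self A).trace_nonneg
  rw [frobNorm, Real.sq_sqrt (Complex.nonneg_iff.1 h).1]
  exact (Complex.eq_re_of_ofReal_le h).symm

theorem stmt_5_general (n : ℕ) (k : ℕ)
    (E : Fin k → Matrix (Fin n) (Fin n) ℂ)
    (hE : ∀ α, (E α).PosSemidef)
    (hsum : ∑ α, E α = 1)
    (Φ : Matrix (Fin n) (Fin n) ℂ → Matrix (Fin n) (Fin n) ℂ)
    (hΦ : ∀ ρ, Φ ρ = ∑ α, (hE α).sqrt * ρ * (hE α).sqrt)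
    (ρ : Matrix (Fin n) (Fin n) ℂ)
    (heq : frobNorm (Φ ρ) = frobNorm ρ) :
    ∀ α, ρ * E α = E α * ρ := by
  set S := fun α => (hE α).sqrt
  have hS : ∀ α, (S α)ᴴ = S α := fun α => (hE α).conjTranspose_sqrt
  have hSS : ∑ α, S α * S α = 1 := by simpa only [S, PosSemidef.sqrt_mul_self] using hsum
  have hΦS : ∀ X, Φ X = ∑ α, S α * X * S α := hΦ
  set K : Fin k × Fin k → Matrix (Fin n) (Fin n) ℂ := fun p => S p.2 * S p.1
  have hKK : ∀ X, ∑ p, (K p)ᴴ * X * K p = Φ (Φ X) := fun X => by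
    simp only [hΦS, ← sum_mul_sum_mul_mul, K, conjTranspose_mul, hS]
  have hK : ∑ p, (K p)ᴴ * K p = 1 := by
    have hΦ1 : Φ 1 = 1 := by simpa only [hΦS, mul_one] using hSS
    simpa only [mul_one, hΦ1] using hKK 1
  have hK' : ∑ p, K p * (K p)ᴴ = 1 := by
    calc ∑ p, K p * (K p)ᴴ = ∑ β, S β * (∑ α, S α * S α) * S β := by
          simp only [K, conjTranspose_mul, hS, Fintype.sum_prod_type_right, Finset.mul_sum,
            Finset.sum_mul, mul_assoc]
      _ = 1 := by simp only [hSS, mul_one]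
  have hnorm : ((Φ ρ)ᴴ * Φ ρ).trace = (ρᴴ * ρ).trace := by
    rw [← ofReal_frobNorm_sq, heq, ofReal_frobNorm_sq]
  have hzero : ∑ p, ((K p * ρ - ρ * K p)ᴴ * (K p * ρ - ρ * K p)).trace = 0 := by
    have hadj : ∀ A B, ((Φ A)ᴴ * B).trace = (Aᴴ * Φ B).trace := by
      simpa only [hΦS] using trace_conjTranspose_sum_mul_mul S hS
    rw [sum_trace_commutator_conjTranspose_mul_self K hK hK', hKK, ← hadj, hadj (Φ ρ), hnorm]
    ring
  intro α
  simpa only [K, S, PosSemidef.sqrt_mul_self, sub_eq_zero, eq_comm] using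
    eq_zero_of_sum_trace_conjTranspose_mul_self_eq_zero hzero (α, α)

theorem stmt_5 (n : ℕ) (hn : 0 < n) (k : ℕ)
    (E : Fin k → Matrix (Fin n) (Fin n) ℂ)
    (hE : ∀ α, (E α).PosSemidef)
    (hsum : ∑ α, E α = 1)
    (Φ : Matrix (Fin n) (Fin n) ℂ → Matrix (Fin n) (Fin n) ℂ)
    (hΦ : ∀ ρ, Φ ρ = ∑ α, (hE α).sqrt * ρ * (hE α).sqrt)
    (ρ : Matrix (Fin n) (Fin n) ℂ)
    (heq : frobNorm (Φ ρ) = frobNorm ρ) :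
    ∀ α, ρ * E α = E α * ρ :=
  stmt_5_general n k E hE hsum Φ hΦ ρ heq
end

section
/- Let n be a positive natural number, let Φ₁, …, Φ_N be bare measurement channels on n×n complex matrices, let Φ = Φ_N ∘ ⋯ ∘ Φ₁, and let Φ̄ denote its entrywise conjugate, i.e. Φ̄(ρ) = conj(Φ(conj ρ)) where conj takes the entrywise complex conjugate of a matrix. Then there is no invertible complex-linear map 𝒰 on n×n complex matrices such that 𝒰 ∘ Φ̄ = (−Φ) ∘ 𝒰. (In other words, bare measurement feedback processes are incompatible with K symmetry with ε_K = −1.) -/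
open Matrix
open scoped ComplexOrder

/-- A bare measurement channel: `Φ(ρ) = Σ_α √E_α ρ √E_α` for some POVM `(E_α)`. -/
def IsBareChannel {n : ℕ}
    (Φ : Matrix (Fin n) (Fin n) ℂ → Matrix (Fin n) (Fin n) ℂ) : Prop :=
  ∃ (k : ℕ) (E : Fin k → Matrix (Fin n) (Fin n) ℂ)
    (hE : ∀ α, (E α).PosSemidef),
      (∑ α, E α) = 1 ∧ ∀ ρ, Φ ρ = ∑ α, ((hE α).1.eigenvectorUnitary.1 * diagonal ((↑) ∘ Real.sqrt ∘ (hE α).1.eigenvalues : Fin n → ℂ) *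
        (star (hE α).1.eigenvectorUnitary : Matrix (Fin n) (Fin n) ℂ)) * ρ *
        ((hE α).1.eigenvectorUnitary.1 * diagonal ((↑) ∘ Real.sqrt ∘ (hE α).1.eigenvalues : Fin n → ℂ) *
        (star (hE α).1.eigenvectorUnitary : Matrix (Fin n) (Fin n) ℂ))

/-!
Since `Φ` is unital, so is `Φ̄`, and the intertwining relation at `ρ = 1` gives `Φ A = -A` for
`A = 𝒰 1 ≠ 0`. But a bare channel `Q X = ∑ Sᵢ X Sᵢ` (`Sᵢ ≥ 0`, `∑ Sᵢ² = 1`) is a self-adjoint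
operator with `0 ≤ Q ≤ 1` for the Hilbert–Schmidt inner product: `⟪X, S X S⟫ = ‖√S X √S‖²` and
`∑ ‖[Sᵢ, X]‖² = 2 (‖X‖² - ⟪X, Q X⟫)`. Applying positivity to `X - Q X` gives
`‖Q X‖² ≤ ⟪X, Q X⟫ ≤ ‖X‖²`, and equality forces `‖X - Q X‖² = 0`. So every bare channel, and
hence every composition of them, strictly decreases the norm off its fixed points; as `Φ` preserves
the norm of `A`, it fixes `A`, and `A = -A = 0`.
-/

open scoped MatrixOrder

section StrictDecrease

variable {α : Type*}

def StrictlyDecreasesOffFixedPoints (ν : α → ℝ) (f : α → α) : Prop :=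
  ∀ x, f x = x ∨ ν (f x) < ν x

namespace StrictlyDecreasesOffFixedPoints

variable {ν : α → ℝ} {f g : α → α}

theorem apply_le (hf : StrictlyDecreasesOffFixedPoints ν f) (x : α) : ν (f x) ≤ ν x :=
  (hf x).elim (fun h => by rw [h]) le_of_lt

theorem comp (hg : StrictlyDecreasesOffFixedPoints ν g)
    (hf : StrictlyDecreasesOffFixedPoints ν f) :
    StrictlyDecreasesOffFixedPoints ν (g ∘ f) := fun x => by
  rcases hf x with hx | hx
  · simpa only [Function.comp_apply, hx] using hg x
  · exact Or.inr ((hg.apply_le (f x)).trans_lt hx)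

theorem eq_zero_of_apply_eq_neg {M : Type*} [AddGroup M] [IsAddTorsionFree M] {ν : M → ℝ}
    {f : M → M} (hf : StrictlyDecreasesOffFixedPoints ν f) (hν : ∀ x, ν (-x) = ν x) {x : M}
    (hx : f x = -x) : x = 0 := by
  rcases hf x with hfix | hlt
  · exact self_eq_neg.mp (hfix.symm.trans hx)
  · rw [hx, hν] at hlt
    exact absurd hlt (lt_irrefl _)

end StrictlyDecreasesOffFixedPoints

end StrictDecrease

theorem List.foldl_comp_induction {α : Type*} {P : (α → α) → Prop}
    (hcomp : ∀ f g, P f → P g → P (g ∘ f)) :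
    ∀ (l : List (α → α)) (f : α → α), P f → (∀ g ∈ l, P g) → P (l.foldl (fun f g => g ∘ f) f)
  | [], _, hf, _ => hf
  | g :: l, f, hf, hl =>
    foldl_comp_induction hcomp l (g ∘ f) (hcomp f g hf (hl g mem_cons_self))
      fun g' hg' => hl g' (mem_cons_of_mem _ hg')

section HilbertSchmidt

variable {m : Type*} [Fintype m]

noncomputable def reHSInner (X Y : Matrix m m ℂ) : ℝ := (Xᴴ * Y).trace.re

theorem reHSInner_comm (X Y : Matrix m m ℂ) : reHSInner X Y = reHSInner Y X := by
  rw [reHSInner, reHSInner, ← conjTranspose_conjTranspose Y, ← conjTranspose_mul,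
    trace_conjTranspose, conjTranspose_conjTranspose]
  rfl

theorem reHSInner_sub_left (X Y Z : Matrix m m ℂ) :
    reHSInner (X - Y) Z = reHSInner X Z - reHSInner Y Z := by
  simp [reHSInner, conjTranspose_sub, Matrix.sub_mul, trace_sub]

theorem reHSInner_sub_right (X Y Z : Matrix m m ℂ) :
    reHSInner X (Y - Z) = reHSInner X Y - reHSInner X Z := by
  simp [reHSInner, Matrix.mul_sub, trace_sub]

theorem reHSInner_self_nonneg (X : Matrix m m ℂ) : 0 ≤ reHSInner X X :=
  Complex.nonneg_iff.mp (posSemidef_conjTranspose_mul_self X).trace_nonneg |>.1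

theorem reHSInner_self_eq_zero {X : Matrix m m ℂ} : reHSInner X X = 0 ↔ X = 0 := by
  have him := (Complex.nonneg_iff.mp (posSemidef_conjTranspose_mul_self X).trace_nonneg).2
  rw [← trace_conjTranspose_mul_self_eq_zero_iff, reHSInner, Complex.ext_iff]
  simp [← him]

theorem reHSInner_neg_neg (X : Matrix m m ℂ) : reHSInner (-X) (-X) = reHSInner X X := by
  simp [reHSInner]

theorem reHSInner_sum_right {ι : Type*} [Fintype ι] (X : Matrix m m ℂ) (Y : ι → Matrix m m ℂ) :
    reHSInner X (∑ i, Y i) = ∑ i, reHSInner X (Y i) := by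
  simp [reHSInner, Matrix.mul_sum, trace_sum]

theorem reHSInner_commutator_self {A : Matrix m m ℂ} (hA : A.IsHermitian) (X : Matrix m m ℂ) :
    reHSInner (A * X - X * A) (A * X - X * A) =
      reHSInner X (A * A * X) + reHSInner X (X * (A * A)) - 2 * reHSInner X (A * X * A) := by
  have hAX : reHSInner (A * X) (A * X) = reHSInner X (A * A * X) := by
    simp only [reHSInner, conjTranspose_mul, hA.eq, Matrix.mul_assoc]
  have hXA : reHSInner (X * A) (X * A) = reHSInner X (X * (A * A)) := by
    simp only [reHSInner, conjTranspose_mul, hA.eq, Matrix.mul_assoc]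
    rw [trace_mul_comm A]
    simp only [Matrix.mul_assoc]
  have hcross : reHSInner (A * X) (X * A) = reHSInner X (A * X * A) := by
    simp only [reHSInner, conjTranspose_mul, hA.eq, Matrix.mul_assoc]
  rw [reHSInner_sub_left, reHSInner_sub_right, reHSInner_sub_right, reHSInner_comm (X * A),
    hAX, hXA, hcross]
  ring

theorem strictlyDecreasesOffFixedPoints_of_nonneg_of_le_self
    (Q : Matrix m m ℂ →ₗ[ℂ] Matrix m m ℂ)
    (hsymm : ∀ X Y, reHSInner Y (Q X) = reHSInner (Q Y) X)
    (hnonneg : ∀ X, 0 ≤ reHSInner X (Q X)) (hle : ∀ X, reHSInner X (Q X) ≤ reHSInner X X) :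
    StrictlyDecreasesOffFixedPoints (fun X => reHSInner X X) Q := by
  intro X
  have hQX_le : reHSInner (Q X) (Q X) ≤ reHSInner X (Q X) := by
    have h := hnonneg (X - Q X)
    rw [map_sub, reHSInner_sub_left, reHSInner_sub_right, reHSInner_sub_right, hsymm (Q X) X] at h
    linarith [hle (Q X)]
  rcases (hQX_le.trans (hle X)).lt_or_eq with hlt | heq
  · exact Or.inr hlt
  · have hdist : reHSInner (X - Q X) (X - Q X) = 0 := by
      rw [reHSInner_sub_left, reHSInner_sub_right, reHSInner_sub_right, reHSInner_comm (Q X) X]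
      linarith [hle X]
    exact Or.inl (sub_eq_zero.mp (reHSInner_self_eq_zero.mp hdist)).symm

end HilbertSchmidt

section Kraus

variable {m ι : Type*} [Fintype m] [Fintype ι] (S : ι → Matrix m m ℂ)

def krausMap : Matrix m m ℂ →ₗ[ℂ] Matrix m m ℂ where
  toFun X := ∑ i, S i * X * S i
  map_add' X Y := by simp only [Matrix.mul_add, Matrix.add_mul, Finset.sum_add_distrib]
  map_smul' c X := by simp [Finset.smul_sum]

theorem krausMap_apply (X : Matrix m m ℂ) : krausMap S X = ∑ i, S i * X * S i := rfl

variable {S}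

theorem krausMap_one [DecidableEq m] (hS : ∑ i, S i * S i = 1) : krausMap S 1 = 1 := by
  simpa [krausMap_apply] using hS

theorem reHSInner_krausMap_comm (hS : ∀ i, (S i).IsHermitian) (X Y : Matrix m m ℂ) :
    reHSInner Y (krausMap S X) = reHSInner (krausMap S Y) X := by
  simp only [reHSInner, krausMap_apply, Matrix.mul_sum, Matrix.sum_mul, conjTranspose_sum,
    conjTranspose_mul, (hS _).eq, trace_sum]
  congr 2 with i
  rw [← Matrix.mul_assoc, trace_mul_comm]
  simp only [Matrix.mul_assoc]

theorem reHSInner_krausMap_self_nonneg [DecidableEq m] (hS : ∀ i, (S i).PosSemidef)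
    (X : Matrix m m ℂ) :
    0 ≤ reHSInner X (krausMap S X) := by
  rw [krausMap_apply, reHSInner_sum_right]
  refine Finset.sum_nonneg fun i _ => ?_
  set T := CFC.sqrt (S i)
  have hT : Tᴴ = T := (CFC.sqrt_nonneg (S i)).posSemidef.1
  have hTT : T * T = S i := CFC.sqrt_mul_sqrt_self (S i) (hS i).nonneg
  have : reHSInner X (S i * X * S i) = reHSInner (T * X * T) (T * X * T) := by
    simp only [reHSInner, conjTranspose_mul, hT, ← hTT]
    simp only [Matrix.mul_assoc]
    rw [trace_mul_comm T]
    simp only [Matrix.mul_assoc]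
  exact this ▸ reHSInner_self_nonneg _

theorem reHSInner_krausMap_self_le [DecidableEq m] (hS : ∀ i, (S i).IsHermitian)
    (hsum : ∑ i, S i * S i = 1) (X : Matrix m m ℂ) :
    reHSInner X (krausMap S X) ≤ reHSInner X X := by
  have hleft : ∑ i, reHSInner X (S i * S i * X) = reHSInner X X := by
    rw [← reHSInner_sum_right, ← Finset.sum_mul, hsum, Matrix.one_mul]
  have hright : ∑ i, reHSInner X (X * (S i * S i)) = reHSInner X X := by
    rw [← reHSInner_sum_right, ← Matrix.mul_sum, hsum, Matrix.mul_one]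
  have h := Finset.sum_nonneg fun i (_ : i ∈ Finset.univ) =>
    reHSInner_self_nonneg (S i * X - X * S i)
  rw [Finset.sum_congr rfl fun i _ => reHSInner_commutator_self (hS i) X, Finset.sum_sub_distrib,
    Finset.sum_add_distrib, hleft, hright, ← Finset.mul_sum, ← reHSInner_sum_right] at h
  rw [krausMap_apply]
  linarith

theorem krausMap_strictlyDecreasesOffFixedPoints [DecidableEq m] (hS : ∀ i, (S i).PosSemidef)
    (hsum : ∑ i, S i * S i = 1) :
    StrictlyDecreasesOffFixedPoints (fun X => reHSInner X X) (krausMap S) :=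
  strictlyDecreasesOffFixedPoints_of_nonneg_of_le_self (krausMap S)
    (reHSInner_krausMap_comm fun i => (hS i).1) (reHSInner_krausMap_self_nonneg hS)
    (reHSInner_krausMap_self_le (fun i => (hS i).1) hsum)

end Kraus

theorem Matrix.PosSemidef.conj_diagonal_sqrt_eigenvalues_eq_sqrt {m : Type*} [Fintype m]
    [DecidableEq m] {A : Matrix m m ℂ} (hA : A.PosSemidef) :
    hA.1.eigenvectorUnitary.1 * diagonal ((↑) ∘ Real.sqrt ∘ hA.1.eigenvalues : m → ℂ) *
      (star hA.1.eigenvectorUnitary : Matrix m m ℂ) = CFC.sqrt A := by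
  rw [CFC.sqrt_eq_real_sqrt A hA.nonneg, cfcₙ_eq_cfc, hA.1.cfc_eq, IsHermitian.cfc,
    Unitary.conjStarAlgAut_apply]
  rfl

theorem IsBareChannel.exists_eq_krausMap {n : ℕ}
    {Φ : Matrix (Fin n) (Fin n) ℂ → Matrix (Fin n) (Fin n) ℂ} (hΦ : IsBareChannel Φ) :
    ∃ (k : ℕ) (S : Fin k → Matrix (Fin n) (Fin n) ℂ),
      (∀ α, (S α).PosSemidef) ∧ ∑ α, S α * S α = 1 ∧ ⇑(krausMap S) = Φ := by
  obtain ⟨k, E, hE, hsum, hΦ⟩ := hΦ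
  refine ⟨k, fun α => CFC.sqrt (E α), fun α => (CFC.sqrt_nonneg (E α)).posSemidef, ?_, ?_⟩
  · simpa only [fun α => CFC.sqrt_mul_sqrt_self (E α) (hE α).nonneg] using hsum
  · funext ρ
    rw [hΦ, krausMap_apply]
    refine Finset.sum_congr rfl fun α _ => ?_
    rw [(hE α).conj_diagonal_sqrt_eigenvalues_eq_sqrt]

theorem IsBareChannel.map_one_and_strictlyDecreasesOffFixedPoints {n : ℕ}
    {Φ : Matrix (Fin n) (Fin n) ℂ → Matrix (Fin n) (Fin n) ℂ} (hΦ : IsBareChannel Φ) :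
    Φ 1 = 1 ∧ StrictlyDecreasesOffFixedPoints (fun X => reHSInner X X) Φ := by
  obtain ⟨k, S, hS, hsum, rfl⟩ := hΦ.exists_eq_krausMap
  exact ⟨krausMap_one hsum, krausMap_strictlyDecreasesOffFixedPoints hS hsum⟩

theorem map_one_and_strictlyDecreasesOffFixedPoints_foldl_comp {n : ℕ}
    (l : List (Matrix (Fin n) (Fin n) ℂ → Matrix (Fin n) (Fin n) ℂ))
    (hl : ∀ g ∈ l, IsBareChannel g) :
    l.foldl (fun f g => g ∘ f) id 1 = 1 ∧
      StrictlyDecreasesOffFixedPoints (fun X => reHSInner X X) (l.foldl (fun f g => g ∘ f) id) :=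
  List.foldl_comp_induction
    (P := fun f => f 1 = 1 ∧ StrictlyDecreasesOffFixedPoints (fun X => reHSInner X X) f)
    (fun f g hf hg => ⟨by rw [Function.comp_apply, hf.1, hg.1], hg.2.comp hf.2⟩) l id
    ⟨rfl, fun _ => Or.inl rfl⟩ fun g hg => (hl g hg).map_one_and_strictlyDecreasesOffFixedPoints

theorem stmt_9 (n N : ℕ) (hn : 0 < n)
    (Φs : Fin N → (Matrix (Fin n) (Fin n) ℂ → Matrix (Fin n) (Fin n) ℂ))
    (hbare : ∀ i, IsBareChannel (Φs i))
    (Φ : Matrix (Fin n) (Fin n) ℂ → Matrix (Fin n) (Fin n) ℂ)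
    (hΦ : Φ = (List.ofFn Φs).foldl (fun f g => g ∘ f) id)
    (Φbar : Matrix (Fin n) (Fin n) ℂ → Matrix (Fin n) (Fin n) ℂ)
    (hΦbar : ∀ ρ, Φbar ρ =
      (Φ (ρ.map (starRingEnd ℂ))).map (starRingEnd ℂ)) :
    ¬ ∃ U : Matrix (Fin n) (Fin n) ℂ →ₗ[ℂ] Matrix (Fin n) (Fin n) ℂ,
        Function.Bijective U ∧ ∀ ρ, U (Φbar ρ) = -(Φ (U ρ)) := by
  rintro ⟨U, hU, hUΦ⟩
  obtain ⟨hΦ1, hΦdec⟩ := hΦ ▸ map_one_and_strictlyDecreasesOffFixedPoints_foldl_comp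
    (List.ofFn Φs) fun g hg => by
      obtain ⟨i, rfl⟩ := List.mem_ofFn.mp hg
      exact hbare i
  have hconj1 : (1 : Matrix (Fin n) (Fin n) ℂ).map (starRingEnd ℂ) = 1 :=
    Matrix.map_one _ (map_zero _) (map_one _)
  have hU1 : Φ (U 1) = -U 1 := by
    have h := hUΦ 1
    rw [hΦbar, hconj1, hΦ1, hconj1] at h
    exact neg_eq_iff_eq_neg.mpr h |>.symm
  have : IsAddTorsionFree (Matrix (Fin n) (Fin n) ℂ) := .of_module_rat _
  have hU1_zero : U 1 = 0 := hΦdec.eq_zero_of_apply_eq_neg reHSInner_neg_neg hU1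
  have : Nonempty (Fin n) := ⟨⟨0, hn⟩⟩
  exact one_ne_zero (hU.1 (hU1_zero.trans (map_zero U).symm))
end
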